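/- If f : ℝ → ℝ has a closed graph in ℝ² and the graph of f is connected in ℝ², then f is continuous. -/
import Mathlib

open Set

private lemma darboux_up (f : ℝ → ℝ)
    (hconn : IsConnected {p : ℝ × ℝ | p.2 = f p.1})
    {a b c : ℝ} (hab : a < b) (h1 : f a < c) (h2 : c < f b) :
    ∃ t ∈ Set.Icc a b, f t = c := by
  by_contra h
  push_neg at h
  set S := {p : ℝ × ℝ | p.2 = f p.1} with hS
  set U : Set (ℝ × ℝ) := ({p : ℝ × ℝ | p.1 < b} ∩ {p | p.2 < c}) ∪ {p | p.1 < a} with hUdef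
  set V : Set (ℝ × ℝ) := ({p : ℝ × ℝ | a < p.1} ∩ {p | c < p.2}) ∪ {p | b < p.1} with hVdef
  have hU : IsOpen U := ((isOpen_lt continuous_fst continuous_const).inter
      (isOpen_lt continuous_snd continuous_const)).union
      (isOpen_lt continuous_fst continuous_const)
  have hV : IsOpen V := ((isOpen_lt continuous_const continuous_fst).inter
      (isOpen_lt continuous_const continuous_snd)).union
      (isOpen_lt continuous_const continuous_fst)
  have hsub : S ⊆ U ∪ V := by
    rintro ⟨x, y⟩ hy
    simp only [hS, mem_setOf_eq] at hy
    subst hy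
    rcases lt_or_ge x a with hx | hx
    · exact Or.inl (Or.inr hx)
    rcases lt_or_ge b x with hx' | hx'
    · exact Or.inr (Or.inr hx')
    have hne : f x ≠ c := h x ⟨hx, hx'⟩
    rcases hne.lt_or_gt with hcx | hcx
    · refine Or.inl (Or.inl ⟨?_, hcx⟩)
      rcases hx'.lt_or_eq with h' | h'
      · exact h'
      · exact absurd (h' ▸ hcx) (not_lt.2 h2.le)
    · refine Or.inr (Or.inl ⟨?_, hcx⟩)
      rcases hx.lt_or_eq with h' | h'
      · exact h'
      · exact absurd (h' ▸ hcx) (not_lt.2 h1.le)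
    -- careful with direction of subst in h'
  have hne1 : (S ∩ U).Nonempty := ⟨(a, f a), by simp [hS], Or.inl ⟨hab, h1⟩⟩
  have hne2 : (S ∩ V).Nonempty := ⟨(b, f b), by simp [hS], Or.inl ⟨hab, h2⟩⟩
  obtain ⟨⟨x, y⟩, _, hu, hv⟩ := hconn.isPreconnected U V hU hV hsub hne1 hne2
  rcases hu with ⟨hu1, hu2⟩ | hu <;> rcases hv with ⟨hv1, hv2⟩ | hv <;>
    simp only [mem_setOf_eq] at * <;> linarith

private lemma darboux_down (f : ℝ → ℝ)
    (hconn : IsConnected {p : ℝ × ℝ | p.2 = f p.1})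
    {a b c : ℝ} (hab : a < b) (h1 : f b < c) (h2 : c < f a) :
    ∃ t ∈ Set.Icc a b, f t = c := by
  by_contra h
  push_neg at h
  set S := {p : ℝ × ℝ | p.2 = f p.1} with hS
  set U : Set (ℝ × ℝ) := ({p : ℝ × ℝ | p.1 < b} ∩ {p | c < p.2}) ∪ {p | p.1 < a} with hUdef
  set V : Set (ℝ × ℝ) := ({p : ℝ × ℝ | a < p.1} ∩ {p | p.2 < c}) ∪ {p | b < p.1} with hVdef
  have hU : IsOpen U := ((isOpen_lt continuous_fst continuous_const).inter
      (isOpen_lt continuous_const continuous_snd)).union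
      (isOpen_lt continuous_fst continuous_const)
  have hV : IsOpen V := ((isOpen_lt continuous_const continuous_fst).inter
      (isOpen_lt continuous_snd continuous_const)).union
      (isOpen_lt continuous_const continuous_fst)
  have hsub : S ⊆ U ∪ V := by
    rintro ⟨x, y⟩ hy
    simp only [hS, mem_setOf_eq] at hy
    subst hy
    rcases lt_or_ge x a with hx | hx
    · exact Or.inl (Or.inr hx)
    rcases lt_or_ge b x with hx' | hx'
    · exact Or.inr (Or.inr hx')
    have hne : f x ≠ c := h x ⟨hx, hx'⟩
    rcases hne.lt_or_gt with hcx | hcx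
    · refine Or.inr (Or.inl ⟨?_, hcx⟩)
      rcases hx.lt_or_eq with h' | h'
      · exact h'
      · exact absurd (h' ▸ hcx) (not_lt.2 h2.le)
    · refine Or.inl (Or.inl ⟨?_, hcx⟩)
      rcases hx'.lt_or_eq with h' | h'
      · exact h'
      · exact absurd (h' ▸ hcx) (not_lt.2 h1.le)
  have hne1 : (S ∩ U).Nonempty := ⟨(a, f a), by simp [hS], Or.inl ⟨hab, h2⟩⟩
  have hne2 : (S ∩ V).Nonempty := ⟨(b, f b), by simp [hS], Or.inl ⟨hab, h1⟩⟩
  obtain ⟨⟨x, y⟩, _, hu, hv⟩ := hconn.isPreconnected U V hU hV hsub hne1 hne2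
  rcases hu with ⟨hu1, hu2⟩ | hu <;> rcases hv with ⟨hv1, hv2⟩ | hv <;>
    simp only [mem_setOf_eq] at * <;> linarith

theorem continuous_of_closed_connected_graph (f : ℝ → ℝ)
    (hclosed : IsClosed {p : ℝ × ℝ | p.2 = f p.1})
    (hconn : IsConnected {p : ℝ × ℝ | p.2 = f p.1}) :
    Continuous f := by
  rw [continuous_iff_continuousAt]
  intro a
  by_contra hc
  rw [ContinuousAt, Metric.tendsto_nhds_nhds] at hc
  push_neg at hc
  obtain ⟨ε, hε, hcl⟩ := hc
  -- key claim: near a there are points with value f a ± ε/2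
  have key : ∀ δ > 0, ∃ t, dist t a < δ ∧ (f t = f a + ε / 2 ∨ f t = f a - ε / 2) := by
    intro δ hδ
    obtain ⟨x, hx, hfx⟩ := hcl δ hδ
    rw [Real.dist_eq] at hfx
    have hxa : x ≠ a := by
      rintro rfl
      simp at hfx; linarith
    have habs : f x ≥ f a + ε ∨ f x ≤ f a - ε := by
      rcases le_or_gt (f a) (f x) with h' | h'
      · left; rw [abs_of_nonneg (by linarith)] at hfx; linarith
      · right; rw [abs_of_neg (by linarith)] at hfx; linarith
    rw [Real.dist_eq, abs_lt] at hx
    rcases hxa.lt_or_gt with hlt | hlt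
    · -- x < a
      rcases habs with hb | hb
      · obtain ⟨t, ht, hft⟩ := darboux_down f hconn (c := f a + ε / 2) hlt
          (by linarith) (by linarith)
        refine ⟨t, ?_, Or.inl hft⟩
        rw [Real.dist_eq, abs_lt]
        obtain ⟨ht1, ht2⟩ := ht
        constructor <;> linarith
      · obtain ⟨t, ht, hft⟩ := darboux_up f hconn (c := f a - ε / 2) hlt
          (by linarith) (by linarith)
        refine ⟨t, ?_, Or.inr hft⟩
        rw [Real.dist_eq, abs_lt]
        obtain ⟨ht1, ht2⟩ := ht
        constructor <;> linarith
    · -- a < x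
      rcases habs with hb | hb
      · obtain ⟨t, ht, hft⟩ := darboux_up f hconn (c := f a + ε / 2) hlt
          (by linarith) (by linarith)
        refine ⟨t, ?_, Or.inl hft⟩
        rw [Real.dist_eq, abs_lt]
        obtain ⟨ht1, ht2⟩ := ht
        constructor <;> linarith
      · obtain ⟨t, ht, hft⟩ := darboux_down f hconn (c := f a - ε / 2) hlt
          (by linarith) (by linarith)
        refine ⟨t, ?_, Or.inr hft⟩
        rw [Real.dist_eq, abs_lt]
        obtain ⟨ht1, ht2⟩ := ht
        constructor <;> linarith
  -- extract a single value c with points arbitrarily close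
  have hone : ∃ c : ℝ, c ≠ f a ∧ ∀ δ > 0, ∃ t, dist t a < δ ∧ f t = c := by
    by_cases H : ∀ δ > 0, ∃ t, dist t a < δ ∧ f t = f a + ε / 2
    · exact ⟨f a + ε / 2, by linarith, H⟩
    · push_neg at H
      obtain ⟨δ₀, hδ₀, hno⟩ := H
      refine ⟨f a - ε / 2, by linarith, fun δ hδ => ?_⟩
      obtain ⟨t, ht, hft⟩ := key (min δ δ₀) (lt_min hδ hδ₀)
      rcases hft with h | h
      · exact absurd h (hno t (lt_of_lt_of_le ht (min_le_right _ _)))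
      · exact ⟨t, lt_of_lt_of_le ht (min_le_left _ _), h⟩
  obtain ⟨c, hcne, hcpt⟩ := hone
  have hmem : (a, c) ∈ {p : ℝ × ℝ | p.2 = f p.1} := by
    rw [← hclosed.closure_eq]
    rw [Metric.mem_closure_iff]
    intro r hr
    obtain ⟨t, ht, hft⟩ := hcpt r hr
    refine ⟨(t, c), by simp [hft.symm], ?_⟩
    rw [Prod.dist_eq]
    simp only [dist_self]
    exact max_lt (by rwa [dist_comm]) hr
  exact hcne hmem
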